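/- Let V be a finite-dimensional real vector space, p : V → W a surjective linear map onto a space W, ω an alternating bilinear form on V whose restriction to F = ker p is nondegenerate, and λ a nondegenerate alternating bilinear form on W. Then for all sufficiently large real c, the form Λ = ω + c · p*λ (where p*λ(ξ, η) = λ(p ξ, p η)) is nondegenerate on V. -/

import Mathlib

/-!
Let `G = {v | ω v u = 0 for all u ∈ F}`. Nondegeneracy of `ω` on `F` makes `G` a complement of
`F`, so `p` restricts to an isomorphism `G ≃ W` and `p*λ` is nondegenerate on `G`. Any `v` in the
kernel of `Λ = ω + c • p*λ` pairs trivially with `F` under `ω`, hence lies in `G`, where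
`Λ = c • (p*λ + c⁻¹ • ω)` is nondegenerate for large `c` because its determinant is a continuous
function of `c⁻¹` that does not vanish at `0`.
-/

open Filter Module

theorem Matrix.eventually_det_add_smul_ne_zero {𝕜 n : Type*} [Field 𝕜] [LinearOrder 𝕜]
    [IsStrictOrderedRing 𝕜] [TopologicalSpace 𝕜] [OrderTopology 𝕜] [Fintype n] [DecidableEq n]
    (A B : Matrix n n 𝕜) (hB : B.det ≠ 0) : ∀ᶠ c : 𝕜 in atTop, (A + c • B).det ≠ 0 := by
  have hcont : Continuous fun t : 𝕜 => (B + t • A).det := by fun_prop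
  have hnear : ∀ᶠ t in nhds (0 : 𝕜), (B + t • A).det ≠ 0 :=
    hcont.continuousAt.eventually_ne (by simpa using hB)
  filter_upwards [tendsto_inv_atTop_zero.eventually hnear, eventually_gt_atTop 0] with c hc hpos
  have hfactor : A + c • B = c • (B + c⁻¹ • A) := by
    rw [smul_add, smul_smul, mul_inv_cancel₀ hpos.ne', one_smul, add_comm]
  rw [hfactor, det_smul]
  exact mul_ne_zero (pow_ne_zero _ hpos.ne') hc

namespace LinearMap

theorem BilinForm.eventually_separatingLeft_add_smul {𝕜 W : Type*} [Field 𝕜] [LinearOrder 𝕜]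
    [IsStrictOrderedRing 𝕜] [TopologicalSpace 𝕜] [OrderTopology 𝕜] [AddCommGroup W]
    [Module 𝕜 W] [FiniteDimensional 𝕜 W] (A B : LinearMap.BilinForm 𝕜 W)
    (hB : B.SeparatingLeft) : ∀ᶠ c : 𝕜 in atTop, (A + c • B).SeparatingLeft := by
  classical
  let b := finBasis 𝕜 W
  rw [separatingLeft_iff_det_ne_zero b] at hB
  filter_upwards [Matrix.eventually_det_add_smul_ne_zero (toMatrix₂ b b A) _ hB] with c hc
  rwa [separatingLeft_iff_det_ne_zero b, map_add, map_smul]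

theorem SeparatingLeft.compl₁₂ {R M N M' N' : Type*} [CommSemiring R]
    [AddCommMonoid M] [Module R M] [AddCommMonoid N] [Module R N]
    [AddCommMonoid M'] [Module R M'] [AddCommMonoid N'] [Module R N']
    {B : M →ₗ[R] N →ₗ[R] R} (hB : B.SeparatingLeft) {f : M' →ₗ[R] M} {g : N' →ₗ[R] N}
    (hf : Function.Injective f) (hg : Function.Surjective g) :
    (B.compl₁₂ f g).SeparatingLeft := by
  intro x hx
  apply hf
  rw [map_zero]
  refine hB (f x) fun y => ?_
  obtain ⟨y, rfl⟩ := hg y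
  exact hx y

theorem bijective_domRestrict_of_isCompl_ker {R M N : Type*} [Ring R]
    [AddCommGroup M] [Module R M] [AddCommGroup N] [Module R N] {f : M →ₗ[R] N}
    (hf : Function.Surjective f) {G : Submodule R M} (hG : IsCompl (ker f) G) :
    Function.Bijective (f.domRestrict G) := by
  refine ⟨injective_domRestrict_iff.mpr hG.disjoint.symm, fun w => ?_⟩
  obtain ⟨v, rfl⟩ := hf w
  obtain ⟨k, g, hk, hg, rfl⟩ := Submodule.codisjoint_iff_exists_add_eq.mp hG.codisjoint v
  exact ⟨⟨g, hg⟩, by simp [mem_ker.mp hk]⟩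

theorem BilinForm.isCompl_flip_orthogonal {K V : Type*} [Field K] [AddCommGroup V]
    [Module K V] [FiniteDimensional K V] {B : LinearMap.BilinForm K V} {F : Submodule K V}
    (hF : (B.restrict F).SeparatingLeft) : IsCompl F (B.flip.orthogonal F) := by
  have hdisj : Disjoint F (B.flip.orthogonal F) := by
    rw [Submodule.disjoint_def]
    intro v hvF hvG
    exact congrArg Subtype.val (hF ⟨v, hvF⟩ fun u => hvG u u.2)
  refine (Submodule.isCompl_iff_disjoint _ _ ?_).mpr hdisj
  have := finrank_add_finrank_orthogonal' (B := B.flip) F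
  lia

end LinearMap

theorem stmt_10_general {V W : Type*} [AddCommGroup V] [Module ℝ V] [FiniteDimensional ℝ V]
    [AddCommGroup W] [Module ℝ W] [FiniteDimensional ℝ W]
    (p : V →ₗ[ℝ] W) (hp : Function.Surjective p)
    (ω : LinearMap.BilinForm ℝ V)
    (hωF : ∀ v ∈ LinearMap.ker p, (∀ u ∈ LinearMap.ker p, ω v u = 0) → v = 0)
    (lam : LinearMap.BilinForm ℝ W)
    (hlam : ∀ w : W, (∀ u : W, lam w u = 0) → w = 0) :
    ∃ c₀ : ℝ, ∀ c : ℝ, c₀ ≤ c →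
      ∀ v : V, (∀ u : V, ω v u + c * lam (p v) (p u) = 0) → v = 0 := by
  set G := ω.flip.orthogonal (LinearMap.ker p)
  have hcompl : IsCompl (LinearMap.ker p) G :=
    LinearMap.BilinForm.isCompl_flip_orthogonal fun x hx =>
      Subtype.ext (hωF x x.2 fun u hu => hx ⟨u, hu⟩)
  obtain ⟨hq_inj, hq_surj⟩ := p.bijective_domRestrict_of_isCompl_ker hp hcompl
  obtain ⟨c₀, hc₀⟩ := eventually_atTop.mp <|
    (ω.restrict G).eventually_separatingLeft_add_smul _
      (LinearMap.SeparatingLeft.compl₁₂ (B := lam) hlam hq_inj hq_surj)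
  refine ⟨c₀, fun c hc v hv => ?_⟩
  have hvG : v ∈ G := fun u hu => by simpa [LinearMap.mem_ker.mp hu] using hv u
  exact congrArg Subtype.val (hc₀ c hc ⟨v, hvG⟩ fun u => hv u)

/-- Let `p : V → W` be a surjective linear map of finite-dimensional
real vector spaces, `ω` an alternating bilinear form on `V` whose restriction to
`F = ker p` is nondegenerate, and `λ` a nondegenerate alternating bilinear form
on `W`. Then for all sufficiently large `c`, the form `Λ = ω + c • p*λ` is
nondegenerate on `V`. -/
theorem stmt_10 {V W : Type*} [AddCommGroup V] [Module ℝ V] [FiniteDimensional ℝ V]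
    [AddCommGroup W] [Module ℝ W] [FiniteDimensional ℝ W]
    (p : V →ₗ[ℝ] W) (hp : Function.Surjective p)
    (ω : LinearMap.BilinForm ℝ V) (hωalt : ω.IsAlt)
    (hωF : ∀ v ∈ LinearMap.ker p, (∀ u ∈ LinearMap.ker p, ω v u = 0) → v = 0)
    (lam : LinearMap.BilinForm ℝ W) (hlamalt : lam.IsAlt)
    (hlam : ∀ w : W, (∀ u : W, lam w u = 0) → w = 0) :
    ∃ c₀ : ℝ, ∀ c : ℝ, c₀ ≤ c →
      ∀ v : V, (∀ u : V, ω v u + c * lam (p v) (p u) = 0) → v = 0 :=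
  stmt_10_general p hp ω hωF lam hlam
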